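/- arXiv:2604.24097 — 2 statements merged into one kernel-verified Lean document; each statement's English description precedes it below -/
import Mathlib

section
/- Let G be a 2-generated finite group. Then J(G) = {β_w : w a word in two letters} is a normal subgroup of ⟨σ₁, σ₄⟩ ≤ Sym(𝕋(G)). Moreover, if G is nilpotent and non-cyclic, then the quotient ⟨σ₁, σ₄⟩/J(G) is isomorphic to the symmetric group S₃. -/
/-!
Since `β_w` conjugates a triple by `w(x, y)`, the map `w ↦ β_w` is a homomorphism from the free
group on `A, B` onto `J(G)`. The relations `σ₁ β_w σ₁⁻¹ = β_{w((AB)⁻¹, A)}`,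
`σ₄ β_w σ₄⁻¹ = β_{w(B, A)}` and `σ₄ σ₁ = β_B σ₁² σ₄` show that `⟨σ₁, σ₄⟩` contains and normalises
`J(G)`, and that each of its elements is `β_w σ₁^i σ₄^j`.

Every element of `⟨σ₁, σ₄⟩` permutes the images of `x, y, z` in the abelianization, `σ₁` as a
3-cycle, `σ₄` as a transposition and `β_w` trivially. When `G` is nilpotent, `G'` lies in every
maximal subgroup, so if two of these images coincide then `G` is generated by one element modulo
`G'`, hence cyclic. For nilpotent non-cyclic `G` some triple therefore has three distinct images,
which makes the permutation of the coordinates a well-defined surjection onto `S₃`; by the normal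
form its kernel is `J(G)`.
-/

open Subgroup Equiv
open scoped commutatorElement

namespace Beauville

variable {G : Type*} [Group G]

/-- `𝕋(G)`: generating triples with product 1. -/
def TripleSet (G : Type*) [Group G] : Set (G × G × G) :=
  {t | Subgroup.closure {t.1, t.2.1} = ⊤ ∧ t.1 * t.2.1 * t.2.2 = 1}

lemma mem_tripleSet {x y z : G} :
    (x, y, z) ∈ TripleSet G ↔ Subgroup.closure {x, y} = ⊤ ∧ x * y * z = 1 := Iff.rfl

lemma closure_pair_top_of {x y u v : G} (h : Subgroup.closure {x, y} = ⊤)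
    (hx : x ∈ Subgroup.closure {u, v}) (hy : y ∈ Subgroup.closure {u, v}) :
    Subgroup.closure ({u, v} : Set G) = ⊤ := by
  rw [eq_top_iff, ← h, Subgroup.closure_le]
  intro g hg
  simp only [Set.mem_insert_iff, Set.mem_singleton_iff] at hg
  rcases hg with rfl | rfl
  · exact hx
  · exact hy

lemma mem_cp_left (u v : G) : u ∈ Subgroup.closure ({u, v} : Set G) :=
  Subgroup.subset_closure (Set.mem_insert _ _)

lemma mem_cp_right (u v : G) : v ∈ Subgroup.closure ({u, v} : Set G) :=
  Subgroup.subset_closure (Set.mem_insert_of_mem _ rfl)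

lemma closure_pair_map_top (f : G ≃* G) {x y : G} (h : Subgroup.closure {x, y} = ⊤) :
    Subgroup.closure ({f x, f y} : Set G) = ⊤ := by
  have himg : ({f x, f y} : Set G) = f.toMonoidHom '' {x, y} := (Set.image_pair _ _ _).symm
  rw [himg, ← MonoidHom.map_closure, h, ← MonoidHom.range_eq_map]
  simpa [MonoidHom.range_eq_top] using f.surjective

section Perms

/-- raw permutation `σ₁ : (x,y,z) ↦ (y,z,x)`. -/
def rotRaw : Equiv.Perm (G × G × G) where
  toFun t := (t.2.1, t.2.2, t.1)
  invFun t := (t.2.2, t.1, t.2.1)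
  left_inv _ := rfl
  right_inv _ := rfl

@[simp] lemma rotRaw_apply (t : G × G × G) : rotRaw t = (t.2.1, t.2.2, t.1) := rfl

lemma rotRaw_mem {t : G × G × G} (ht : t ∈ TripleSet G) : rotRaw t ∈ TripleSet G := by
  obtain ⟨x, y, z⟩ := t
  rw [mem_tripleSet] at ht
  obtain ⟨hc, hp⟩ := ht
  rw [rotRaw_apply]
  have hx : x = (y * z)⁻¹ := by
    rw [mul_assoc] at hp
    exact eq_inv_of_mul_eq_one_left hp
  refine mem_tripleSet.2 ⟨closure_pair_top_of hc ?_ ?_, ?_⟩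
  · rw [hx]
    exact inv_mem (mul_mem (mem_cp_left _ _) (mem_cp_right _ _))
  · exact mem_cp_left _ _
  · rw [hx, mul_inv_cancel]

lemma rotRaw_iff (t : G × G × G) : t ∈ TripleSet G ↔ rotRaw t ∈ TripleSet G :=
  ⟨fun h => rotRaw_mem h, fun h => by
    have h2 := rotRaw_mem (rotRaw_mem h)
    rwa [show rotRaw (rotRaw (rotRaw t)) = t by simp] at h2⟩

/-- `σ₁` as a permutation of `𝕋(G)`. -/
def sigma1T (G : Type*) [Group G] : Equiv.Perm (TripleSet G) :=
  rotRaw.subtypePerm (fun t => (rotRaw_iff t).symm)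

/-- `σ₂ = σ₁ ∘ σ₁`, acting as `(x,y,z) ↦ (z,x,y)`. -/
def sigma2T (G : Type*) [Group G] : Equiv.Perm (TripleSet G) :=
  sigma1T G * sigma1T G

/-- raw permutation `σ₃ : (x,y,z) ↦ (z,y,x^y)`. -/
def sigma3Raw : Equiv.Perm (G × G × G) where
  toFun t := (t.2.2, t.2.1, t.2.1⁻¹ * t.1 * t.2.1)
  invFun t := (t.2.1 * t.2.2 * t.2.1⁻¹, t.2.1, t.1)
  left_inv := by rintro ⟨x, y, z⟩; simp [mul_assoc]
  right_inv := by rintro ⟨x, y, z⟩; simp [mul_assoc]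

@[simp] lemma sigma3Raw_apply (t : G × G × G) :
    sigma3Raw t = (t.2.2, t.2.1, t.2.1⁻¹ * t.1 * t.2.1) := rfl

@[simp] lemma sigma3Raw_symm_apply (t : G × G × G) :
    sigma3Raw.symm t = (t.2.1 * t.2.2 * t.2.1⁻¹, t.2.1, t.1) := rfl

lemma sigma3Raw_mem {t : G × G × G} (ht : t ∈ TripleSet G) : sigma3Raw t ∈ TripleSet G := by
  obtain ⟨x, y, z⟩ := t
  rw [mem_tripleSet] at ht
  obtain ⟨hc, hp⟩ := ht
  have hz : z = (x * y)⁻¹ := eq_inv_of_mul_eq_one_right hp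
  rw [sigma3Raw_apply]
  refine mem_tripleSet.2 ⟨closure_pair_top_of hc ?_ ?_, ?_⟩
  · have hxe : x = z⁻¹ * y⁻¹ := by rw [hz]; group
    rw [hxe]
    exact mul_mem (inv_mem (mem_cp_left _ _)) (inv_mem (mem_cp_right _ _))
  · exact mem_cp_right _ _
  · rw [hz]; group

lemma sigma3Raw_symm_mem {t : G × G × G} (ht : t ∈ TripleSet G) :
    sigma3Raw.symm t ∈ TripleSet G := by
  obtain ⟨x, y, z⟩ := t
  rw [mem_tripleSet] at ht
  obtain ⟨hc, hp⟩ := ht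
  have hz : z = (x * y)⁻¹ := eq_inv_of_mul_eq_one_right hp
  rw [sigma3Raw_symm_apply]
  refine mem_tripleSet.2 ⟨closure_pair_top_of hc ?_ ?_, ?_⟩
  · have hxe : x = y⁻¹ * (y * z * y⁻¹)⁻¹ := by rw [hz]; group
    rw [hxe]
    exact mul_mem (inv_mem (mem_cp_right _ _)) (inv_mem (mem_cp_left _ _))
  · exact mem_cp_right _ _
  · rw [hz]; group

lemma sigma3Raw_iff (t : G × G × G) : t ∈ TripleSet G ↔ sigma3Raw t ∈ TripleSet G :=
  ⟨fun h => sigma3Raw_mem h, fun h => by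
    have h2 := sigma3Raw_symm_mem h
    rwa [Equiv.symm_apply_apply] at h2⟩

/-- `σ₃` as a permutation of `𝕋(G)`. -/
def sigma3T (G : Type*) [Group G] : Equiv.Perm (TripleSet G) :=
  sigma3Raw.subtypePerm (fun t => (sigma3Raw_iff t).symm)

/-- raw permutation `σ₄ : (x,y,z) ↦ (y,x,z^x)`. -/
def sigma4Raw : Equiv.Perm (G × G × G) where
  toFun t := (t.2.1, t.1, t.1⁻¹ * t.2.2 * t.1)
  invFun t := (t.2.1, t.1, t.2.1 * t.2.2 * t.2.1⁻¹)
  left_inv := by rintro ⟨x, y, z⟩; simp [mul_assoc]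
  right_inv := by rintro ⟨x, y, z⟩; simp [mul_assoc]

@[simp] lemma sigma4Raw_apply (t : G × G × G) :
    sigma4Raw t = (t.2.1, t.1, t.1⁻¹ * t.2.2 * t.1) := rfl

@[simp] lemma sigma4Raw_symm_apply (t : G × G × G) :
    sigma4Raw.symm t = (t.2.1, t.1, t.2.1 * t.2.2 * t.2.1⁻¹) := rfl

lemma sigma4Raw_mem {t : G × G × G} (ht : t ∈ TripleSet G) : sigma4Raw t ∈ TripleSet G := by
  obtain ⟨x, y, z⟩ := t
  rw [mem_tripleSet] at ht
  obtain ⟨hc, hp⟩ := ht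
  have hz : z = (x * y)⁻¹ := eq_inv_of_mul_eq_one_right hp
  rw [sigma4Raw_apply]
  refine mem_tripleSet.2 ⟨closure_pair_top_of hc ?_ ?_, ?_⟩
  · exact mem_cp_right _ _
  · exact mem_cp_left _ _
  · rw [hz]; group

lemma sigma4Raw_symm_mem {t : G × G × G} (ht : t ∈ TripleSet G) :
    sigma4Raw.symm t ∈ TripleSet G := by
  obtain ⟨x, y, z⟩ := t
  rw [mem_tripleSet] at ht
  obtain ⟨hc, hp⟩ := ht
  have hz : z = (x * y)⁻¹ := eq_inv_of_mul_eq_one_right hp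
  rw [sigma4Raw_symm_apply]
  refine mem_tripleSet.2 ⟨closure_pair_top_of hc ?_ ?_, ?_⟩
  · exact mem_cp_right _ _
  · exact mem_cp_left _ _
  · rw [hz]; group

lemma sigma4Raw_iff (t : G × G × G) : t ∈ TripleSet G ↔ sigma4Raw t ∈ TripleSet G :=
  ⟨fun h => sigma4Raw_mem h, fun h => by
    have h2 := sigma4Raw_symm_mem h
    rwa [Equiv.symm_apply_apply] at h2⟩

/-- `σ₄` as a permutation of `𝕋(G)`. -/
def sigma4T (G : Type*) [Group G] : Equiv.Perm (TripleSet G) :=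
  sigma4Raw.subtypePerm (fun t => (sigma4Raw_iff t).symm)

/-- raw permutation `σ₅ : (x,y,z) ↦ (x,z,y^z)`. -/
def sigma5Raw : Equiv.Perm (G × G × G) where
  toFun t := (t.1, t.2.2, t.2.2⁻¹ * t.2.1 * t.2.2)
  invFun t := (t.1, t.2.1 * t.2.2 * t.2.1⁻¹, t.2.1)
  left_inv := by rintro ⟨x, y, z⟩; simp [mul_assoc]
  right_inv := by rintro ⟨x, y, z⟩; simp [mul_assoc]

@[simp] lemma sigma5Raw_apply (t : G × G × G) :
    sigma5Raw t = (t.1, t.2.2, t.2.2⁻¹ * t.2.1 * t.2.2) := rfl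

@[simp] lemma sigma5Raw_symm_apply (t : G × G × G) :
    sigma5Raw.symm t = (t.1, t.2.1 * t.2.2 * t.2.1⁻¹, t.2.1) := rfl

lemma sigma5Raw_mem {t : G × G × G} (ht : t ∈ TripleSet G) : sigma5Raw t ∈ TripleSet G := by
  obtain ⟨x, y, z⟩ := t
  rw [mem_tripleSet] at ht
  obtain ⟨hc, hp⟩ := ht
  have hz : z = (x * y)⁻¹ := eq_inv_of_mul_eq_one_right hp
  rw [sigma5Raw_apply]
  refine mem_tripleSet.2 ⟨closure_pair_top_of hc ?_ ?_, ?_⟩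
  · exact mem_cp_left _ _
  · have hye : y = x⁻¹ * z⁻¹ := by rw [hz]; group
    rw [hye]
    exact mul_mem (inv_mem (mem_cp_left _ _)) (inv_mem (mem_cp_right _ _))
  · rw [hz]; group

lemma sigma5Raw_symm_mem {t : G × G × G} (ht : t ∈ TripleSet G) :
    sigma5Raw.symm t ∈ TripleSet G := by
  obtain ⟨x, y, z⟩ := t
  rw [mem_tripleSet] at ht
  obtain ⟨hc, hp⟩ := ht
  have hz : z = (x * y)⁻¹ := eq_inv_of_mul_eq_one_right hp
  rw [sigma5Raw_symm_apply]
  refine mem_tripleSet.2 ⟨closure_pair_top_of hc ?_ ?_, ?_⟩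
  · exact mem_cp_left _ _
  · have hv : y * z * y⁻¹ = x⁻¹ * y⁻¹ := by rw [hz]; group
    rw [hv]
    have h2 : (x * (x⁻¹ * y⁻¹))⁻¹ ∈ Subgroup.closure ({x, x⁻¹ * y⁻¹} : Set G) :=
      inv_mem (mul_mem (mem_cp_left _ _) (mem_cp_right _ _))
    simpa using h2
  · rw [hz]; group

lemma sigma5Raw_iff (t : G × G × G) : t ∈ TripleSet G ↔ sigma5Raw t ∈ TripleSet G :=
  ⟨fun h => sigma5Raw_mem h, fun h => by
    have h2 := sigma5Raw_symm_mem h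
    rwa [Equiv.symm_apply_apply] at h2⟩

/-- `σ₅` as a permutation of `𝕋(G)`. -/
def sigma5T (G : Type*) [Group G] : Equiv.Perm (TripleSet G) :=
  sigma5Raw.subtypePerm (fun t => (sigma5Raw_iff t).symm)

end Perms


/-- Evaluation of a word in two letters at a pair of group elements. -/
def wordEval (w : FreeGroup Bool) (x y : G) : G :=
  FreeGroup.lift (fun b => bif b then x else y) w

lemma wordEval_conj (w : FreeGroup Bool) (x y c : G) :
    wordEval w (c⁻¹ * x * c) (c⁻¹ * y * c) = c⁻¹ * wordEval w x y * c := by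
  have key : FreeGroup.lift (fun b => bif b then c⁻¹ * x * c else c⁻¹ * y * c) =
      ((MulAut.conj c⁻¹).toMonoidHom.comp (FreeGroup.lift (fun b => bif b then x else y))) := by
    apply FreeGroup.ext_hom
    intro b
    cases b <;> simp [MulAut.conj_apply, mul_assoc]
  unfold wordEval
  rw [key]
  simp [MulAut.conj_apply, mul_assoc]

/-- Conjugation of a triple by a group element (`t^c`). -/
def conjTriple (c : G) (t : G × G × G) : G × G × G :=
  (c⁻¹ * t.1 * c, c⁻¹ * t.2.1 * c, c⁻¹ * t.2.2 * c)

lemma conjTriple_conjTriple (c d : G) (t : G × G × G) :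
    conjTriple d (conjTriple c t) = conjTriple (c * d) t := by
  simp [conjTriple, mul_assoc]

@[simp] lemma conjTriple_one (t : G × G × G) : conjTriple 1 t = t := by
  simp [conjTriple]

lemma conjTriple_mem (c : G) {t : G × G × G} (ht : t ∈ TripleSet G) :
    conjTriple c t ∈ TripleSet G := by
  obtain ⟨x, y, z⟩ := t
  rw [mem_tripleSet] at ht
  obtain ⟨hc, hp⟩ := ht
  refine mem_tripleSet.2 ⟨?_, ?_⟩
  · have h1 : (c⁻¹ * x * c : G) = (MulAut.conj c⁻¹ : G ≃* G) x := by
      simp [MulAut.conj_apply]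
    have h2 : (c⁻¹ * y * c : G) = (MulAut.conj c⁻¹ : G ≃* G) y := by
      simp [MulAut.conj_apply]
    rw [h1, h2]
    exact closure_pair_map_top _ hc
  · have : c⁻¹ * x * c * (c⁻¹ * y * c) * (c⁻¹ * z * c) = c⁻¹ * (x * y * z) * c := by group
    rw [this, hp]
    group

/-- The raw permutation `β_w : t ↦ t^{w(x,y)}`. -/
def betaRaw (w : FreeGroup Bool) : Equiv.Perm (G × G × G) where
  toFun t := conjTriple (wordEval w t.1 t.2.1) t
  invFun t := conjTriple (wordEval w t.1 t.2.1)⁻¹ t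
  left_inv := by
    rintro ⟨x, y, z⟩
    have h1 : wordEval w (conjTriple (wordEval w x y) (x, y, z)).1
        (conjTriple (wordEval w x y) (x, y, z)).2.1 = wordEval w x y := by
      show wordEval w ((wordEval w x y)⁻¹ * x * wordEval w x y)
          ((wordEval w x y)⁻¹ * y * wordEval w x y) = _
      rw [wordEval_conj]
      group
    show conjTriple _ (conjTriple (wordEval w x y) (x, y, z)) = (x, y, z)
    rw [h1, conjTriple_conjTriple, mul_inv_cancel, conjTriple_one]
  right_inv := by
    rintro ⟨x, y, z⟩
    have h1 : wordEval w (conjTriple (wordEval w x y)⁻¹ (x, y, z)).1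
        (conjTriple (wordEval w x y)⁻¹ (x, y, z)).2.1 = wordEval w x y := by
      show wordEval w ((wordEval w x y)⁻¹⁻¹ * x * (wordEval w x y)⁻¹)
          ((wordEval w x y)⁻¹⁻¹ * y * (wordEval w x y)⁻¹) = _
      rw [wordEval_conj]
      group
    show conjTriple _ (conjTriple (wordEval w x y)⁻¹ (x, y, z)) = (x, y, z)
    rw [h1, conjTriple_conjTriple, inv_mul_cancel, conjTriple_one]

lemma betaRaw_iff (w : FreeGroup Bool) (t : G × G × G) :
    t ∈ TripleSet G ↔ betaRaw w t ∈ TripleSet G := by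
  constructor
  · intro h
    exact conjTriple_mem _ h
  · intro h
    have h2 : (betaRaw w).symm (betaRaw w t) ∈ TripleSet G := conjTriple_mem _ h
    rwa [Equiv.symm_apply_apply] at h2

/-- `β_w` as a permutation of `𝕋(G)`. -/
def betaT (G : Type*) [Group G] (w : FreeGroup Bool) : Equiv.Perm (TripleSet G) :=
  (betaRaw w).subtypePerm (fun t => (betaRaw_iff w t).symm)

/-- The raw diagonal action of an automorphism on triples. -/
def autRaw (α : MulAut G) : Equiv.Perm (G × G × G) :=
  Equiv.prodCongr (α : G ≃* G).toEquiv
    (Equiv.prodCongr (α : G ≃* G).toEquiv (α : G ≃* G).toEquiv)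

@[simp] lemma autRaw_apply (α : MulAut G) (t : G × G × G) :
    autRaw α t = (α t.1, α t.2.1, α t.2.2) := rfl

lemma autRaw_mem (α : MulAut G) {t : G × G × G} (ht : t ∈ TripleSet G) :
    autRaw α t ∈ TripleSet G := by
  obtain ⟨x, y, z⟩ := t
  rw [mem_tripleSet] at ht
  obtain ⟨hc, hp⟩ := ht
  rw [autRaw_apply]
  refine mem_tripleSet.2 ⟨closure_pair_map_top (α : G ≃* G) hc, ?_⟩
  rw [← map_mul, ← map_mul, hp, map_one]

lemma autRaw_symm_apply (α : MulAut G) (t : G × G × G) :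
    (autRaw α).symm t = autRaw α⁻¹ t := rfl

lemma autRaw_iff (α : MulAut G) (t : G × G × G) :
    t ∈ TripleSet G ↔ autRaw α t ∈ TripleSet G := by
  constructor
  · exact fun h => autRaw_mem α h
  · intro h
    have h2 := autRaw_mem α⁻¹ h
    rw [← autRaw_symm_apply, Equiv.symm_apply_apply] at h2
    exact h2

/-- `α̃`, the diagonal action of an automorphism on `𝕋(G)`. -/
def dAutT (α : MulAut G) : Equiv.Perm (TripleSet G) :=
  (autRaw α).subtypePerm (fun t => (autRaw_iff α t).symm)

/-- `ι̃_g`, the diagonal action of the inner automorphism `ι_g` on `𝕋(G)`. -/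
def dInnT (g : G) : Equiv.Perm (TripleSet G) :=
  dAutT (MulAut.conj g)

/-- `J(G) = {β_w : w a word in two letters}`. -/
def JSet (G : Type*) [Group G] : Set (Equiv.Perm (TripleSet G)) :=
  Set.range (betaT G)

/-- The subgroup `⟨σ₁, σ₄⟩` of `Sym(𝕋(G))`. -/
def SS14 (G : Type*) [Group G] : Subgroup (Equiv.Perm (TripleSet G)) :=
  Subgroup.closure {sigma1T G, sigma4T G}

/-- `I(G) = ⟨DInn(G), σ₁, σ₂, σ₃, σ₄, σ₅⟩`. -/
def IGroup (G : Type*) [Group G] : Subgroup (Equiv.Perm (TripleSet G)) :=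
  Subgroup.closure (Set.range (dInnT (G := G)) ∪
    {sigma1T G, sigma2T G, sigma3T G, sigma4T G, sigma5T G})


/-- `Σ(x,y)`: the union of all conjugates of `⟨x⟩`, `⟨y⟩` and `⟨x*y⟩`. -/
def sigmaSet (x y : G) : Set G :=
  ⋃ g : G, (fun h => g * h * g⁻¹) ''
    ((Subgroup.zpowers x : Set G) ∪ (Subgroup.zpowers y : Set G) ∪
      (Subgroup.zpowers (x * y) : Set G))

/-- An (unmixed) Beauville structure for `G`. -/
def IsBeauvilleStructure (t : (G × G × G) × (G × G × G)) : Prop :=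
  ∃ x₁ y₁ x₂ y₂ : G,
    t = ((x₁, y₁, (x₁ * y₁)⁻¹), (x₂, y₂, (x₂ * y₂)⁻¹)) ∧
    Subgroup.closure {x₁, y₁} = ⊤ ∧ Subgroup.closure {x₂, y₂} = ⊤ ∧
    sigmaSet x₁ y₁ ∩ sigmaSet x₂ y₂ = {1}

/-- `𝕌(G)`, the set of all Beauville structures for `G`, as a subset of `G³ × G³`. -/
def beauvilleStructures (G : Type*) [Group G] : Set ((G × G × G) × (G × G × G)) :=
  {t | IsBeauvilleStructure t}

/-- A Beauville group is a group admitting a Beauville structure. -/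
def IsBeauvilleGroup (G : Type*) [Group G] : Prop :=
  ∃ t : (G × G × G) × (G × G × G), IsBeauvilleStructure t

/-- A metacyclic group: it has a cyclic normal subgroup with cyclic quotient. -/
def IsMetacyclic (G : Type*) [Group G] : Prop :=
  ∃ (N : Subgroup G) (hN : N.Normal), IsCyclic N ∧
    (haveI := hN; IsCyclic (G ⧸ N))

/-- `𝕌(G)` viewed as a subset of `𝕋(G) × 𝕋(G)`. -/
def USet (G : Type*) [Group G] : Set (TripleSet G × TripleSet G) :=
  {t | IsBeauvilleStructure ((t.1 : G × G × G), (t.2 : G × G × G))}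

/-- Generators of `B(G)`: the permutations of `𝕌(G)` induced by the componentwise action
of `I(G) × I(G)` and by the diagonal action of `Aut(G)`. -/
def BGens (G : Type*) [Group G] : Set (Equiv.Perm (USet G)) :=
  {π | ∃ ρ₁ ∈ IGroup G, ∃ ρ₂ ∈ IGroup G,
      ∀ t : USet G, ((π t : TripleSet G × TripleSet G)) = (ρ₁ (t : TripleSet G × TripleSet G).1, ρ₂ (t : TripleSet G × TripleSet G).2)} ∪
  {π | ∃ α : MulAut G,
      ∀ t : USet G, ((π t : TripleSet G × TripleSet G)) = (dAutT α (t : TripleSet G × TripleSet G).1, dAutT α (t : TripleSet G × TripleSet G).2)}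

/-- The permutation(s) of `𝕌(G)` exchanging the two triples. -/
def tauGens (G : Type*) [Group G] : Set (Equiv.Perm (USet G)) :=
  {π | ∀ t : USet G, ((π t : TripleSet G × TripleSet G)) =
      ((t : TripleSet G × TripleSet G).2, (t : TripleSet G × TripleSet G).1)}

/-- `B(G)`, the subgroup of `Sym(𝕌(G))` generated by the action of `I(G) × I(G)`
and the diagonal action of `Aut(G)`. -/
def BGroup (G : Type*) [Group G] : Subgroup (Equiv.Perm (USet G)) :=
  Subgroup.closure (BGens G)

/-- `A_𝕌(G) = ⟨B(G), τ⟩`. -/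
def AUGroup (G : Type*) [Group G] : Subgroup (Equiv.Perm (USet G)) :=
  Subgroup.closure (BGens G ∪ tauGens G)


/-- The subgroup of `G` generated by all `n`-th powers. -/
def powSubgroup (G : Type*) [Group G] (n : ℕ) : Subgroup G :=
  Subgroup.closure (Set.range fun g : G => g ^ n)

/-- The subgroup of inner automorphisms, `Inn(G)`. -/
def innAut (G : Type*) [Group G] : Subgroup (MulAut G) :=
  (MulAut.conj : G →* MulAut G).range

instance innAut_normal (G : Type*) [Group G] : (innAut G).Normal := by
  constructor
  rintro - ⟨g, rfl⟩ α
  refine ⟨α g, ?_⟩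
  ext x
  simp only [MulAut.conj_apply, MulAut.mul_apply, MulAut.inv_def, map_mul, map_inv,
    MulEquiv.apply_symm_apply]

section Presented

/-- The two generators of the free group on two letters. -/
def fA : FreeGroup Bool := FreeGroup.of true

def fB : FreeGroup Bool := FreeGroup.of false

/-- Relations of `M(p,e,i) = ⟨a,b ∣ a^{p^e} = b^{p^e} = 1, [a,b] = a^{p^i}⟩`. -/
def MRels (p e i : ℕ) : Set (FreeGroup Bool) :=
  {fA ^ p ^ e, fB ^ p ^ e, ⁅fA, fB⁆ * (fA ^ p ^ i)⁻¹}

/-- The metacyclic group `M(p,e,i)`. -/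
abbrev MGroup (p e i : ℕ) : Type := PresentedGroup (MRels p e i)

def ma (p e i : ℕ) : MGroup p e i := PresentedGroup.of true

def mb (p e i : ℕ) : MGroup p e i := PresentedGroup.of false

/-- Relations of
`H(p,e,i,j,k) = ⟨a,b ∣ a^{p^e} = [b,a]^{p^j} = [b,a,a] = [b,a,b] = 1, b^{p^i} = [b,a]^{p^k}⟩`. -/
def HRels (p e i j k : ℕ) : Set (FreeGroup Bool) :=
  {fA ^ p ^ e, ⁅fB, fA⁆ ^ p ^ j, ⁅⁅fB, fA⁆, fA⁆, ⁅⁅fB, fA⁆, fB⁆,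
    fB ^ p ^ i * (⁅fB, fA⁆ ^ p ^ k)⁻¹}

/-- The group `H(p,e,i,j,k)` of nilpotency class 2. -/
abbrev HGroup (p e i j k : ℕ) : Type := PresentedGroup (HRels p e i j k)

def ha (p e i j k : ℕ) : HGroup p e i j k := PresentedGroup.of true

def hb (p e i j k : ℕ) : HGroup p e i j k := PresentedGroup.of false

/-- Relations of
`K(p,e,j) = ⟨a,b ∣ a^{p^e} = b^{p^e} = [b,a]^{p^j} = [b,a,b] = [b,a,a] = 1⟩`. -/
def KRels (p e j : ℕ) : Set (FreeGroup Bool) :=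
  {fA ^ p ^ e, fB ^ p ^ e, ⁅fB, fA⁆ ^ p ^ j, ⁅⁅fB, fA⁆, fB⁆, ⁅⁅fB, fA⁆, fA⁆}

/-- The group `K(p,e,j)` of nilpotency class 2. -/
abbrev KGroup (p e j : ℕ) : Type := PresentedGroup (KRels p e j)

def ka (p e j : ℕ) : KGroup p e j := PresentedGroup.of true

def kb (p e j : ℕ) : KGroup p e j := PresentedGroup.of false

end Presented

end Beauville

section Nilpotent

variable {G : Type*} [Group G]

theorem commutator_le_of_isCoatom [Group.IsNilpotent G] {M : Subgroup G} (hM : IsCoatom M) :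
    commutator G ≤ M := by
  have : M.Normal :=
    NormalizerCondition.normal_of_coatom M Group.normalizerCondition_of_isNilpotent hM
  obtain ⟨x, hx⟩ : ∃ x, x ∉ M := SetLike.exists_not_mem_of_ne_top M hM.1 rfl
  have hsup : M ⊔ zpowers x = ⊤ :=
    hM.2 _ (lt_of_le_of_ne le_sup_left fun h => hx (h ▸ mem_sup_right (mem_zpowers x)))
  exact Normal.commutator_le_of_self_sup_commutative_eq_top hsup inferInstance

theorem eq_top_of_sup_commutator_eq_top [Finite G] [Group.IsNilpotent G] {H : Subgroup G}
    (h : H ⊔ commutator G = ⊤) : H = ⊤ := by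
  refine (eq_top_or_exists_le_coatom H).resolve_right ?_
  rintro ⟨M, hM, hHM⟩
  exact hM.1 (top_le_iff.1 (h ▸ sup_le hHM (commutator_le_of_isCoatom hM)))

theorem isCyclic_of_abelianization_of_mem_zpowers [Finite G] [Group.IsNilpotent G] {x y : G}
    (hxy : closure {x, y} = ⊤) (hy : Abelianization.of y ∈ zpowers (Abelianization.of x)) :
    IsCyclic G := by
  have hy' : y ∈ zpowers x ⊔ commutator G := by
    rw [← Abelianization.ker_of, ← comap_map_eq, MonoidHom.map_zpowers]
    exact hy
  have hsup : zpowers x ⊔ commutator G = ⊤ := by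
    rw [eq_top_iff, ← hxy, closure_le, Set.insert_subset_iff, Set.singleton_subset_iff]
    exact ⟨mem_sup_left (mem_zpowers x), hy'⟩
  exact isCyclic_iff_exists_zpowers_eq_top.2 ⟨x, eq_top_of_sup_commutator_eq_top hsup⟩

end Nilpotent

theorem mem_normalizer_range_of_mul_eq {F P : Type*} [Group F] [Group P] (f : F →* P) {g : P}
    {φ : F → F} (hφ : Function.Surjective φ) (hg : ∀ w, g * f w = f (φ w) * g) :
    g ∈ normalizer (f.range : Set P) := by
  refine mem_normalizer_iff.2 fun h => ⟨?_, ?_⟩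
  · rintro ⟨w, rfl⟩
    exact ⟨φ w, by rw [hg, mul_inv_cancel_right]⟩
  · rintro ⟨v, hv⟩
    obtain ⟨u, rfl⟩ := hφ v
    have : g * h * g⁻¹ = g * f u * g⁻¹ := by rw [← hv, hg, mul_inv_cancel_right]
    exact ⟨u, (mul_left_cancel (mul_right_cancel this)).symm⟩

theorem pow_mul_eq_iterate_mul_pow {M P : Type*} [Monoid P] {g : P} {f : M → P} {φ : M → M}
    (hg : ∀ w, g * f w = f (φ w) * g) (n : ℕ) (w : M) :
    g ^ n * f w = f (φ^[n] w) * g ^ n := by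
  induction n generalizing w with
  | zero => simp
  | succ n ih =>
    rw [pow_succ, mul_assoc, hg, ← mul_assoc, ih, Function.iterate_succ_apply, mul_assoc]

theorem mem_zpowers_of_mul_eq_inv {G : Type*} [Group G] {a b : G} (h : a * b = a⁻¹) :
    b ∈ zpowers a := by
  have hb : b = a⁻¹ * a⁻¹ := by rw [← inv_mul_cancel_left a b, h]
  exact hb ▸ mul_mem (inv_mem (mem_zpowers a)) (inv_mem (mem_zpowers a))

theorem Matrix.injective_vec3 {α : Type*} {a b c : α} (hab : a ≠ b) (hac : a ≠ c)
    (hbc : b ≠ c) : Function.Injective ![a, b, c] := by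
  intro i j h
  fin_cases i <;> fin_cases j <;> simp_all [eq_comm]

section Equivariant

variable {α β γ : Type*} (f : α → β → γ)

def equivariantPairs : Subgroup (Perm α × Perm β) where
  carrier := {p | ∀ a, f (p.1 a) ∘ p.2 = f a}
  mul_mem' {p q} hp hq a := by
    simp only [Prod.fst_mul, Prod.snd_mul, Perm.coe_mul, Perm.mul_apply]
    rw [← Function.comp_assoc, hp (q.1 a), hq]
  one_mem' _ := rfl
  inv_mem' {p} hp a := by
    rw [Prod.fst_inv, Prod.snd_inv, ← hp (p.1⁻¹ a), ← Perm.mul_apply, Function.comp_assoc,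
      ← Perm.coe_mul, mul_inv_cancel, mul_inv_cancel, Perm.one_apply, Perm.coe_one,
      Function.comp_id]

variable {f} {a₀ : α}

theorem eq_of_mem_equivariantPairs (h₀ : Function.Injective (f a₀)) {ρ : Perm α}
    {e e' : Perm β} (h : (ρ, e) ∈ equivariantPairs f) (h' : (ρ, e') ∈ equivariantPairs f) :
    e = e' := by
  have h1 : ((1 : Perm α), e⁻¹ * e') ∈ equivariantPairs f := by
    simpa using mul_mem (inv_mem h) h'
  exact inv_mul_eq_one.1 (Equiv.ext fun b => h₀ (congrFun (h1 a₀) b))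

theorem exists_monoidHom_mem_equivariantPairs (h₀ : Function.Injective (f a₀))
    {H : Subgroup (Perm α)} (hH : H ≤ (equivariantPairs f).map (MonoidHom.fst _ _)) :
    ∃ φ : H →* Perm β, ∀ ρ : H, ((ρ : Perm α), φ ρ) ∈ equivariantPairs f := by
  have hex : ∀ ρ : H, ∃ e, ((ρ : Perm α), e) ∈ equivariantPairs f := fun ρ => by
    obtain ⟨⟨_, e⟩, hp, hρ⟩ := hH ρ.2
    exact ⟨e, (congrArg (·, e) hρ) ▸ hp⟩
  choose ψ hψ using hex
  exact ⟨{ toFun := ψ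
           map_one' := eq_of_mem_equivariantPairs h₀ (hψ 1) (one_mem _)
           map_mul' := fun ρ σ =>
             eq_of_mem_equivariantPairs h₀ (hψ (ρ * σ)) (mul_mem (hψ ρ) (hψ σ)) }, hψ⟩

end Equivariant

theorem exists_finRotate_inv_pow_mul_swap_pow_eq (e : Perm (Fin 3)) :
    ∃ i j : ℕ, (finRotate 3)⁻¹ ^ i * swap 0 1 ^ j = e := by
  have : ∀ e : Perm (Fin 3), ∃ i : Fin 3, ∃ j : Fin 2,
      (finRotate 3)⁻¹ ^ (i : ℕ) * swap 0 1 ^ (j : ℕ) = e := by decide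
  obtain ⟨i, j, h⟩ := this e
  exact ⟨i, j, h⟩

theorem mod_eq_zero_of_finRotate_inv_pow_mul_swap_pow_eq_one {i j : ℕ}
    (h : (finRotate 3)⁻¹ ^ i * swap (0 : Fin 3) 1 ^ j = 1) : i % 3 = 0 ∧ j % 2 = 0 := by
  rw [pow_eq_pow_mod i (by decide : (finRotate 3)⁻¹ ^ 3 = 1),
    pow_eq_pow_mod j (by decide : swap (0 : Fin 3) 1 ^ 2 = 1)] at h
  have key : ∀ a < 3, ∀ b < 2, (finRotate 3)⁻¹ ^ a * swap (0 : Fin 3) 1 ^ b = 1 →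
      a = 0 ∧ b = 0 := by decide
  exact key _ (Nat.mod_lt _ (by norm_num)) _ (Nat.mod_lt _ (by norm_num)) h

namespace Beauville

variable {G : Type*} [Group G]

@[simp] theorem coe_sigma1T_apply (t : TripleSet G) :
    (sigma1T G t : G × G × G) = rotRaw (t : G × G × G) := rfl

@[simp] theorem coe_sigma4T_apply (t : TripleSet G) :
    (sigma4T G t : G × G × G) = sigma4Raw (t : G × G × G) := rfl

@[simp] theorem coe_betaT_apply (w : FreeGroup Bool) (t : TripleSet G) :
    (betaT G w t : G × G × G) =
      conjTriple (wordEval w (t : G × G × G).1 (t : G × G × G).2.1) (t : G × G × G) := rfl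

theorem betaT_mul (w v : FreeGroup Bool) : betaT G (w * v) = betaT G w * betaT G v := by
  refine Equiv.ext fun ⟨⟨x, y, z⟩, _⟩ => Subtype.ext ?_
  simp only [coe_betaT_apply, Perm.mul_apply, conjTriple, wordEval_conj]
  simp only [wordEval, map_mul, Prod.mk.injEq]
  refine ⟨?_, ?_, ?_⟩ <;> group

def betaHom (G : Type*) [Group G] : FreeGroup Bool →* Perm (TripleSet G) :=
  MonoidHom.mk' (betaT G) betaT_mul

theorem betaT_one : betaT G 1 = 1 := (betaHom G).map_one

def wordRot : FreeGroup Bool →* FreeGroup Bool :=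
  FreeGroup.lift fun b => bif b then (fA * fB)⁻¹ else fA

def wordSwap : FreeGroup Bool →* FreeGroup Bool :=
  FreeGroup.lift fun b => bif b then fB else fA

theorem wordEval_lift (g : Bool → FreeGroup Bool) (w : FreeGroup Bool) (x y : G) :
    wordEval (FreeGroup.lift g w) x y =
      wordEval w (wordEval (g true) x y) (wordEval (g false) x y) := by
  unfold wordEval
  rw [← MonoidHom.comp_apply]
  congr 1
  refine FreeGroup.ext_hom _ _ fun b => ?_
  cases b <;> simp

theorem wordEval_wordRot (w : FreeGroup Bool) (x y : G) :
    wordEval (wordRot w) x y = wordEval w (x * y)⁻¹ x := by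
  rw [wordRot, wordEval_lift]
  simp [wordEval, fA, fB]

theorem wordEval_wordSwap (w : FreeGroup Bool) (x y : G) :
    wordEval (wordSwap w) x y = wordEval w y x := by
  rw [wordSwap, wordEval_lift]
  simp [wordEval, fA, fB]

theorem wordRot_surjective : Function.Surjective wordRot := by
  have h : wordRot.comp (wordRot.comp wordRot) = MonoidHom.id (FreeGroup Bool) :=
    FreeGroup.ext_hom _ _ fun b => by cases b <;> simp [wordRot, fA, fB]
  exact fun w => ⟨wordRot (wordRot w), DFunLike.congr_fun h w⟩

theorem wordSwap_surjective : Function.Surjective wordSwap := by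
  have h : wordSwap.comp wordSwap = MonoidHom.id (FreeGroup Bool) :=
    FreeGroup.ext_hom _ _ fun b => by cases b <;> simp [wordSwap, fA, fB]
  exact fun w => ⟨wordSwap w, DFunLike.congr_fun h w⟩

theorem sigma1T_mul_betaT (w : FreeGroup Bool) :
    sigma1T G * betaT G w = betaT G (wordRot w) * sigma1T G := by
  refine Equiv.ext fun ⟨⟨x, y, z⟩, ht⟩ => Subtype.ext ?_
  have hx : (y * z)⁻¹ = x :=
    (eq_inv_of_mul_eq_one_left ((mul_assoc x y z).symm.trans ht.2)).symm
  simp [conjTriple, wordEval_wordRot, hx]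

theorem sigma4T_mul_betaT (w : FreeGroup Bool) :
    sigma4T G * betaT G w = betaT G (wordSwap w) * sigma4T G := by
  refine Equiv.ext fun ⟨⟨x, y, z⟩, _⟩ => Subtype.ext ?_
  simp only [Perm.mul_apply, coe_betaT_apply, coe_sigma4T_apply, sigma4Raw_apply, conjTriple,
    wordEval_wordSwap, Prod.mk.injEq, true_and]
  group

theorem sigma1T_pow_three : sigma1T G ^ 3 = 1 := rfl

theorem sigma4T_sq : sigma4T G ^ 2 = 1 := by
  refine Equiv.ext fun ⟨⟨x, y, z⟩, ht⟩ => Subtype.ext ?_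
  obtain rfl : z = (x * y)⁻¹ := eq_inv_of_mul_eq_one_right ht.2
  simp only [pow_two, Perm.mul_apply, coe_sigma4T_apply, sigma4Raw_apply, Perm.one_apply,
    Prod.mk.injEq, true_and]
  group

theorem sigma4T_mul_sigma1T :
    sigma4T G * sigma1T G = betaT G fB * (sigma1T G ^ 2 * sigma4T G) := by
  refine Equiv.ext fun ⟨⟨x, y, z⟩, ht⟩ => Subtype.ext ?_
  obtain rfl : z = (x * y)⁻¹ := eq_inv_of_mul_eq_one_right ht.2
  simp only [pow_two, Perm.coe_mul, Function.comp_apply, coe_sigma4T_apply, coe_sigma1T_apply,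
    rotRaw_apply, sigma4Raw_apply, coe_betaT_apply, conjTriple, wordEval, fB,
    FreeGroup.lift_apply_of, cond_false, Prod.mk.injEq]
  refine ⟨?_, ?_, ?_⟩ <;> group

theorem sigma1T_mem_SS14 : sigma1T G ∈ SS14 G := subset_closure (Set.mem_insert _ _)

theorem sigma4T_mem_SS14 : sigma4T G ∈ SS14 G := subset_closure (Set.mem_insert_of_mem _ rfl)

theorem range_betaHom_le_SS14 : (betaHom G).range ≤ SS14 G := by
  have hB : betaT G fB ∈ SS14 G := by
    rw [eq_mul_inv_of_mul_eq sigma4T_mul_sigma1T.symm]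
    exact mul_mem (mul_mem sigma4T_mem_SS14 sigma1T_mem_SS14)
      (inv_mem (mul_mem (pow_mem sigma1T_mem_SS14 2) sigma4T_mem_SS14))
  have hA : betaT G fA ∈ SS14 G := by
    have : wordRot fB = fA := by simp [wordRot, fA, fB]
    rw [← this, eq_mul_inv_of_mul_eq (sigma1T_mul_betaT fB).symm]
    exact mul_mem (mul_mem sigma1T_mem_SS14 hB) (inv_mem sigma1T_mem_SS14)
  rw [MonoidHom.range_eq_map, ← FreeGroup.closure_range_of, MonoidHom.map_closure, closure_le]
  rintro _ ⟨_, ⟨b, rfl⟩, rfl⟩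
  cases b
  exacts [hB, hA]

theorem SS14_le_normalizer_range_betaHom :
    SS14 G ≤ normalizer ((betaHom G).range : Set (Perm (TripleSet G))) := by
  rw [SS14, closure_le, Set.insert_subset_iff, Set.singleton_subset_iff]
  exact ⟨mem_normalizer_range_of_mul_eq _ wordRot_surjective sigma1T_mul_betaT,
    mem_normalizer_range_of_mul_eq _ wordSwap_surjective sigma4T_mul_betaT⟩

theorem exists_eq_betaT_mul_pow_mul_pow {ρ : Perm (TripleSet G)} (hρ : ρ ∈ SS14 G) :
    ∃ (w : FreeGroup Bool) (i j : ℕ), ρ = betaT G w * sigma1T G ^ i * sigma4T G ^ j := by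
  set P : Perm (TripleSet G) → Prop :=
    fun ρ => ∃ (w : FreeGroup Bool) (i j : ℕ), ρ = betaT G w * sigma1T G ^ i * sigma4T G ^ j
  have mul_sigma4 : ∀ ρ, P ρ → P (ρ * sigma4T G) := by
    rintro _ ⟨w, i, j, rfl⟩
    exact ⟨w, i, j + 1, by rw [pow_succ, mul_assoc]⟩
  have mul_sigma1 : ∀ ρ, P ρ → P (ρ * sigma1T G) := by
    rintro _ ⟨w, i, j, rfl⟩
    rcases Nat.mod_two_eq_zero_or_one j with hj | hj <;>
      rw [pow_eq_pow_mod j sigma4T_sq, hj]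
    · exact ⟨w, i + 1, 0, by simp [pow_succ, mul_assoc]⟩
    · refine ⟨w * wordRot^[i] fB, i + 2, 1, ?_⟩
      rw [pow_one, mul_assoc, sigma4T_mul_sigma1T, ← mul_assoc, mul_assoc (betaT G w),
        pow_mul_eq_iterate_mul_pow sigma1T_mul_betaT, betaT_mul]
      group
  unfold SS14 at hρ
  induction hρ using closure_induction_right with
  | one => exact ⟨1, 0, 0, by simp [betaT_one]⟩
  | mul_right ρ _ g hg hP =>
    rcases hg with rfl | rfl
    exacts [mul_sigma1 ρ hP, mul_sigma4 ρ hP]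
  | mul_inv_cancel ρ _ g hg hP =>
    rcases hg with rfl | rfl
    · rw [inv_eq_of_mul_eq_one_right ((pow_succ' _ 2).symm.trans sigma1T_pow_three), pow_two,
        ← mul_assoc]
      exact mul_sigma1 _ (mul_sigma1 ρ hP)
    · rw [inv_eq_of_mul_eq_one_right (pow_two (sigma4T G) ▸ sigma4T_sq)]
      exact mul_sigma4 ρ hP

def abelianizedCoords (t : TripleSet G) : Fin 3 → Abelianization G :=
  ![Abelianization.of (t : G × G × G).1, Abelianization.of (t : G × G × G).2.1,
    Abelianization.of (t : G × G × G).2.2]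

theorem betaT_mem_equivariantPairs (w : FreeGroup Bool) :
    (betaT G w, 1) ∈ equivariantPairs (abelianizedCoords (G := G)) := fun t => by
  funext k
  fin_cases k <;> simp [abelianizedCoords, conjTriple]

theorem sigma1T_mem_equivariantPairs :
    (sigma1T G, (finRotate 3)⁻¹) ∈ equivariantPairs (abelianizedCoords (G := G)) := fun t => by
  funext k
  fin_cases k <;> rfl

theorem sigma4T_mem_equivariantPairs :
    (sigma4T G, swap 0 1) ∈ equivariantPairs (abelianizedCoords (G := G)) := fun t => by
  funext k
  fin_cases k <;> simp [abelianizedCoords, swap_apply_of_ne_of_ne]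

theorem SS14_le_map_fst_equivariantPairs :
    SS14 G ≤ (equivariantPairs (abelianizedCoords (G := G))).map (MonoidHom.fst _ _) := by
  rw [SS14, closure_le, Set.insert_subset_iff, Set.singleton_subset_iff]
  exact ⟨⟨_, sigma1T_mem_equivariantPairs, rfl⟩, ⟨_, sigma4T_mem_equivariantPairs, rfl⟩⟩

theorem exists_injective_abelianizedCoords [Finite G] [Group.IsNilpotent G] (hG : ¬IsCyclic G)
    {x y : G} (hxy : closure {x, y} = ⊤) :
    ∃ t : TripleSet G, Function.Injective (abelianizedCoords t) := by
  have hyx : closure {y, x} = ⊤ := by rwa [Set.pair_comm]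
  set u := Abelianization.of x
  set v := Abelianization.of y
  have huv : u ≠ v := fun h => hG (isCyclic_of_abelianization_of_mem_zpowers hxy
    (show v ∈ zpowers u from h ▸ mem_zpowers u))
  have hu : u ≠ (u * v)⁻¹ := fun h => hG (isCyclic_of_abelianization_of_mem_zpowers hxy
    (mem_zpowers_of_mul_eq_inv (inv_eq_iff_eq_inv.1 h.symm)))
  have hv : v ≠ (u * v)⁻¹ := fun h => hG (isCyclic_of_abelianization_of_mem_zpowers hyx
    (mem_zpowers_of_mul_eq_inv ((mul_comm v u).trans (inv_eq_iff_eq_inv.1 h.symm))))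
  refine ⟨⟨(x, y, (x * y)⁻¹), hxy, by group⟩, ?_⟩
  simp only [abelianizedCoords, map_inv, map_mul]
  exact Matrix.injective_vec3 huv hu hv

theorem exists_surjective_ker_eq_JSet [Finite G] [Group.IsNilpotent G] (hG : ¬IsCyclic G)
    (h2gen : ∃ x y : G, closure {x, y} = ⊤) :
    ∃ φ : SS14 G →* Perm (Fin 3), Function.Surjective φ ∧
      ∀ ρ : SS14 G, φ ρ = 1 ↔ (ρ : Perm (TripleSet G)) ∈ JSet G := by
  obtain ⟨x, y, hxy⟩ := h2gen
  obtain ⟨t₀, ht₀⟩ := exists_injective_abelianizedCoords hG hxy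
  obtain ⟨φ, hφ⟩ :=
    exists_monoidHom_mem_equivariantPairs ht₀ SS14_le_map_fst_equivariantPairs
  have hφ₁ : φ ⟨_, sigma1T_mem_SS14⟩ = (finRotate 3)⁻¹ :=
    eq_of_mem_equivariantPairs ht₀ (hφ _) sigma1T_mem_equivariantPairs
  have hφ₄ : φ ⟨_, sigma4T_mem_SS14⟩ = swap 0 1 :=
    eq_of_mem_equivariantPairs ht₀ (hφ _) sigma4T_mem_equivariantPairs
  refine ⟨φ, fun e => ?_, fun ρ => ⟨fun h => ?_, ?_⟩⟩
  · obtain ⟨i, j, rfl⟩ := exists_finRotate_inv_pow_mul_swap_pow_eq e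
    exact ⟨⟨_, sigma1T_mem_SS14⟩ ^ i * ⟨_, sigma4T_mem_SS14⟩ ^ j,
      by rw [map_mul, map_pow, map_pow, hφ₁, hφ₄]⟩
  · obtain ⟨w, i, j, hρ⟩ := exists_eq_betaT_mul_pow_mul_pow ρ.2
    have hρ' := mul_mem (mul_mem (betaT_mem_equivariantPairs (G := G) w)
      (pow_mem sigma1T_mem_equivariantPairs i)) (pow_mem sigma4T_mem_equivariantPairs j)
    rw [Prod.pow_mk, Prod.pow_mk, Prod.mk_mul_mk, Prod.mk_mul_mk, ← hρ, one_mul] at hρ'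
    obtain ⟨hi, hj⟩ := mod_eq_zero_of_finRotate_inv_pow_mul_swap_pow_eq_one
      (eq_of_mem_equivariantPairs ht₀ hρ' (h ▸ hφ ρ))
    refine ⟨w, ?_⟩
    rw [hρ, pow_eq_pow_mod i sigma1T_pow_three, pow_eq_pow_mod j sigma4T_sq, hi, hj]
    simp
  · rintro ⟨w, hw⟩
    exact eq_of_mem_equivariantPairs ht₀ (hφ ρ) (hw ▸ betaT_mem_equivariantPairs w)

theorem statement13 (G : Type*) [Group G] [Finite G]
    (h2gen : ∃ x y : G, Subgroup.closure {x, y} = ⊤) :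
    ∃ J : Subgroup (Equiv.Perm (TripleSet G)),
      (J : Set (Equiv.Perm (TripleSet G))) = JSet G ∧ J ≤ SS14 G ∧
      (J.subgroupOf (SS14 G)).Normal ∧
      (Group.IsNilpotent G → ¬ IsCyclic G →
        ∃ φ : SS14 G →* Equiv.Perm (Fin 3), Function.Surjective φ ∧
          ∀ x : SS14 G, φ x = 1 ↔ (x : Equiv.Perm (TripleSet G)) ∈ JSet G) :=
  ⟨(betaHom G).range, rfl, range_betaHom_le_SS14,
    (normal_subgroupOf_iff_le_normalizer range_betaHom_le_SS14).2 SS14_le_normalizer_range_betaHom,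
    fun _ hG => exists_surjective_ker_eq_JSet hG h2gen⟩

end Beauville
end

section
/- Let p be a prime and let G be a Beauville p-group of nilpotency class 2. Then: (i) DInn(G) ∩ ⟨σ₁, σ₄⟩ = 1 inside Sym(𝕋(G)); (ii) the intersection of I(G) × I(G) with DDAut(G) inside Sym(𝕋(G)) × Sym(𝕋(G)) equals {(ι̃_g, ι̃_g) : g ∈ G}. -/
open Subgroup Equiv

namespace Beauville

variable {G : Type*} [Group G]

/-!
In a group of class 2 commutators are central and `h⁻¹ * g * h = g * ⁅g, h⁆`. Hence each `σᵢ`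
and its inverse sends a generating triple `t = (x, y, z)` to a triple whose `i`-th entry is a fixed
entry of `t` times a fixed power of `⁅x, y⁆`; since any two entries of `t` have commutator
`⁅x, y⁆ ^ (±1)`, this shape survives composition and so holds on all of `⟨σ₁, …, σ₅⟩`.
If an automorphism `α` acts on `𝕋(G)` in this way, working modulo the proper subgroup `G'` with the
generating pairs `(u, v)`, `(u, u * v)` and `(u * v, v)` shows that `α` keeps every entry in place
up to a power of `⁅u, v⁆`, and `α (u * v) = α u * α v` then kills these powers: `α̃ = 1`.
Finally the diagonal action of `Aut(G)` commutes with every `σᵢ`, so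
`I(G) = DInn(G) · ⟨σ₁, …, σ₅⟩`, and both claims follow.
-/

open scoped commutatorElement

section ClassTwo

lemma commutatorElement_mem_center_of_lowerCentralSeries_two_eq_bot
    (h : Subgroup.lowerCentralSeries (⊤ : Subgroup G) 2 = ⊥) (g k : G) : ⁅g, k⁆ ∈ center G :=
  commutator_top_right_eq_bot_iff_le_center.mp h (commutator_mem_commutator (mem_top g) (mem_top k))

lemma commutator_ne_top_of_lowerCentralSeries
    (h : Subgroup.lowerCentralSeries (⊤ : Subgroup G) 2 = ⊥ ∧
      Subgroup.lowerCentralSeries (⊤ : Subgroup G) 1 ≠ ⊥) :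
    commutator G ≠ ⊤ := by
  intro htop
  apply h.2
  rw [← h.1, top_lowerCentralSeries_one, htop]
  show ⊤ = ⁅(⊤ : Subgroup G).lowerCentralSeries 1, ⊤⁆
  rw [top_lowerCentralSeries_one, htop, ← _root_.commutator_def, htop]

lemma commutatorElement_mul_mem_center {a b c d : G} (hc : c ∈ center G) (hd : d ∈ center G) :
    ⁅a * c, b * d⁆ = ⁅a, b⁆ := by
  have hc' : ⁅c, b * d⁆ = 1 :=
    commutatorElement_eq_one_iff_mul_comm.mpr (mem_center_iff.mp hc _).symm
  have hd' : ⁅a, d⁆ = 1 := commutatorElement_eq_one_iff_mul_comm.mpr (mem_center_iff.mp hd a)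
  rw [commutatorElement_mul_left_eq_conj_mul, hc', commutatorElement_mul_right_eq_mul_conj, hd']
  group

variable (hcen : ∀ g h : G, ⁅g, h⁆ ∈ center G)
include hcen

lemma inv_mul_mul_eq_mul_commutatorElement (g h : G) : h⁻¹ * g * h = g * ⁅g, h⁆ := by
  have hc : h⁻¹ * ⁅g, h⁆ * h = ⁅g, h⁆ := by
    rw [mul_assoc, ← mem_center_iff.mp (hcen g h) h, inv_mul_cancel_left]
  rw [mem_center_iff.mp (hcen g h) g, ← hc, commutatorElement_def]
  group

lemma mul_mul_inv_eq_mul_commutatorElement (g h : G) : h * g * h⁻¹ = g * ⁅h, g⁆ := by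
  rw [mem_center_iff.mp (hcen h g) g, commutatorElement_def]
  group

variable {x y z : G} (hxyz : x * y * z = 1)
include hxyz

lemma commutatorElement_snd_thd : ⁅y, z⁆ = ⁅x, y⁆ := by
  have h : ⁅y, z⁆ = x⁻¹ * (y⁻¹ * x * y) := by
    rw [eq_inv_of_mul_eq_one_right hxyz, commutatorElement_def]
    group
  rw [h, inv_mul_mul_eq_mul_commutatorElement hcen, inv_mul_cancel_left]

lemma commutatorElement_thd_fst : ⁅z, x⁆ = ⁅x, y⁆ := by
  have hyzx : y * z * x = 1 := by rw [mul_eq_one_comm, ← mul_assoc, hxyz]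
  rw [commutatorElement_snd_thd hcen hyzx, commutatorElement_snd_thd hcen hxyz]

end ClassTwo

section CoordTwist

def coord (t : TripleSet G) : Fin 3 → G := ![t.val.1, t.val.2.1, t.val.2.2]

def IsCoordTwist (ρ : Perm (TripleSet G)) : Prop :=
  ∃ (π : Fin 3 → Fin 3) (n : Fin 3 → ℤ), ∀ t i,
    coord (ρ t) i = coord t (π i) * ⁅coord t 0, coord t 1⁆ ^ n i

lemma exists_commutatorElement_coord (hcen : ∀ g h : G, ⁅g, h⁆ ∈ center G) (a b : Fin 3) :
    ∃ k : ℤ, ∀ t : TripleSet G, ⁅coord t a, coord t b⁆ = ⁅coord t 0, coord t 1⁆ ^ k := by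
  have h12 (t : TripleSet G) : ⁅coord t 1, coord t 2⁆ = ⁅coord t 0, coord t 1⁆ :=
    commutatorElement_snd_thd hcen t.2.2
  have h20 (t : TripleSet G) : ⁅coord t 2, coord t 0⁆ = ⁅coord t 0, coord t 1⁆ :=
    commutatorElement_thd_fst hcen t.2.2
  -- `k` is `0` on the diagonal, `1` for cyclically ordered `(a, b)` and `-1` otherwise.
  fin_cases a <;> fin_cases b <;> simp only [Fin.zero_eta, Fin.mk_one, Fin.reduceFinMk]
  all_goals first
    | exact ⟨0, fun t => (commutatorElement_self _).trans (zpow_zero _).symm⟩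
    | exact ⟨1, fun t => (zpow_one _).symm⟩
    | exact ⟨1, fun t => (h12 t).trans (zpow_one _).symm⟩
    | exact ⟨1, fun t => (h20 t).trans (zpow_one _).symm⟩
    | exact ⟨-1, fun t => (commutatorElement_inv _ _).symm.trans (zpow_neg_one _).symm⟩
    | exact ⟨-1, fun t => (commutatorElement_inv _ _).symm.trans
        ((congrArg (·⁻¹) (h12 t)).trans (zpow_neg_one _).symm)⟩
    | exact ⟨-1, fun t => (commutatorElement_inv _ _).symm.trans
        ((congrArg (·⁻¹) (h20 t)).trans (zpow_neg_one _).symm)⟩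

lemma IsCoordTwist.mul (hcen : ∀ g h : G, ⁅g, h⁆ ∈ center G) {ρ ρ' : Perm (TripleSet G)}
    (hρ' : IsCoordTwist ρ') (hρ : IsCoordTwist ρ) : IsCoordTwist (ρ' * ρ) := by
  obtain ⟨π, n, hρ⟩ := hρ
  obtain ⟨π', n', hρ'⟩ := hρ'
  obtain ⟨k, hk⟩ := exists_commutatorElement_coord hcen (π 0) (π 1)
  refine ⟨π ∘ π', fun i => n (π' i) + k * n' i, fun t i => ?_⟩
  have hcomm : ⁅coord (ρ t) 0, coord (ρ t) 1⁆ = ⁅coord t 0, coord t 1⁆ ^ k := by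
    rw [hρ, hρ, commutatorElement_mul_mem_center (zpow_mem (hcen _ _) _)
      (zpow_mem (hcen _ _) _), hk]
  rw [Perm.mul_apply, hρ', hcomm, hρ, mul_assoc, ← zpow_mul, ← zpow_add, Function.comp_apply]

end CoordTwist

section Generators

lemma isCoordTwist_sigma1 : IsCoordTwist (sigma1T G) :=
  ⟨![1, 2, 0], 0, fun t i => by fin_cases i <;> simp [sigma1T, coord]⟩

lemma isCoordTwist_sigma1_inv : IsCoordTwist (sigma1T G)⁻¹ :=
  ⟨![2, 0, 1], 0, fun t i => by fin_cases i <;> simp [sigma1T, coord, rotRaw]⟩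

variable (hcen : ∀ g h : G, ⁅g, h⁆ ∈ center G)
include hcen

lemma isCoordTwist_sigma3 : IsCoordTwist (sigma3T G) :=
  ⟨![2, 1, 0], ![0, 0, 1], fun t i => by
    fin_cases i <;> simp [sigma3T, coord, inv_mul_mul_eq_mul_commutatorElement hcen]⟩

lemma isCoordTwist_sigma3_inv : IsCoordTwist (sigma3T G)⁻¹ :=
  ⟨![2, 1, 0], ![1, 0, 0], fun t i => by
    fin_cases i <;> simp [sigma3T, coord, mul_mul_inv_eq_mul_commutatorElement hcen,
      commutatorElement_snd_thd hcen t.2.2]⟩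

lemma isCoordTwist_sigma4 : IsCoordTwist (sigma4T G) :=
  ⟨![1, 0, 2], ![0, 0, 1], fun t i => by
    fin_cases i <;> simp [sigma4T, coord, inv_mul_mul_eq_mul_commutatorElement hcen,
      commutatorElement_thd_fst hcen t.2.2]⟩

lemma isCoordTwist_sigma4_inv : IsCoordTwist (sigma4T G)⁻¹ :=
  ⟨![1, 0, 2], ![0, 0, 1], fun t i => by
    fin_cases i <;> simp [sigma4T, coord, mul_mul_inv_eq_mul_commutatorElement hcen,
      commutatorElement_snd_thd hcen t.2.2]⟩

lemma isCoordTwist_sigma5 : IsCoordTwist (sigma5T G) :=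
  ⟨![0, 2, 1], ![0, 0, 1], fun t i => by
    fin_cases i <;> simp [sigma5T, coord, inv_mul_mul_eq_mul_commutatorElement hcen,
      commutatorElement_snd_thd hcen t.2.2]⟩

lemma isCoordTwist_sigma5_inv : IsCoordTwist (sigma5T G)⁻¹ :=
  ⟨![0, 2, 1], ![0, 1, 0], fun t i => by
    fin_cases i <;> simp [sigma5T, coord, mul_mul_inv_eq_mul_commutatorElement hcen,
      commutatorElement_snd_thd hcen t.2.2]⟩

end Generators

def sigmaSubgroup (G : Type*) [Group G] : Subgroup (Perm (TripleSet G)) :=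
  closure {sigma1T G, sigma2T G, sigma3T G, sigma4T G, sigma5T G}

lemma SS14_le_sigmaSubgroup : SS14 G ≤ sigmaSubgroup G :=
  closure_mono (by simp [Set.insert_subset_iff])

lemma isCoordTwist_of_mem_sigmaSubgroup (hcen : ∀ g h : G, ⁅g, h⁆ ∈ center G)
    {ρ : Perm (TripleSet G)} (hρ : ρ ∈ sigmaSubgroup G) : IsCoordTwist ρ := by
  have hσ2 : IsCoordTwist (sigma2T G) := isCoordTwist_sigma1.mul hcen isCoordTwist_sigma1
  induction hρ using closure_induction'' with
  | mem σ hσ =>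
    rcases hσ with rfl | rfl | rfl | rfl | rfl
    exacts [isCoordTwist_sigma1, hσ2, isCoordTwist_sigma3 hcen, isCoordTwist_sigma4 hcen,
      isCoordTwist_sigma5 hcen]
  | inv_mem σ hσ =>
    rcases hσ with rfl | rfl | rfl | rfl | rfl
    · exact isCoordTwist_sigma1_inv
    · rw [sigma2T, mul_inv_rev]
      exact isCoordTwist_sigma1_inv.mul hcen isCoordTwist_sigma1_inv
    · exact isCoordTwist_sigma3_inv hcen
    · exact isCoordTwist_sigma4_inv hcen
    · exact isCoordTwist_sigma5_inv hcen
  | one => exact ⟨id, 0, fun t i => by simp⟩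
  | mul ρ ρ' _ _ hρ hρ' => exact hρ.mul hcen hρ'

section Automorphisms

lemma closure_pair_swap_eq_top {u v : G} (h : closure {u, v} = ⊤) :
    closure ({v, u} : Set G) = ⊤ := by
  rwa [Set.pair_comm]

lemma closure_pair_mul_right_eq_top {u v : G} (h : closure {u, v} = ⊤) :
    closure ({u, u * v} : Set G) = ⊤ := by
  refine closure_pair_top_of h (mem_cp_left _ _) ?_
  simpa using mul_mem (inv_mem (mem_cp_left u (u * v))) (mem_cp_right u (u * v))

lemma closure_pair_mul_left_eq_top {u v : G} (h : closure {u, v} = ⊤) :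
    closure ({u * v, v} : Set G) = ⊤ := by
  refine closure_pair_top_of h ?_ (mem_cp_right _ _)
  simpa using mul_mem (mem_cp_left (u * v) v) (inv_mem (mem_cp_right (u * v) v))

def tripleOfPair {u v : G} (h : closure {u, v} = ⊤) : TripleSet G :=
  ⟨(u, v, (u * v)⁻¹), h, mul_inv_cancel _⟩

lemma coord_tripleOfPair {u v : G} (h : closure {u, v} = ⊤) :
    coord (tripleOfPair h) = ![u, v, (u * v)⁻¹] := rfl

lemma coord_dAutT (α : MulAut G) (t : TripleSet G) (i : Fin 3) :
    coord (dAutT α t) i = α (coord t i) := by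
  fin_cases i <;> rfl

lemma eq_zero_of_forall_abelianization (hperf : commutator G ≠ ⊤) {x y : G}
    (hxy : closure {x, y} = ⊤) {f : G → Abelianization G} {j : Fin 3}
    (hf : ∀ u v : G, closure {u, v} = ⊤ → f u = Abelianization.of (![u, v, (u * v)⁻¹] j)) :
    j = 0 := by
  by_contra hj
  have hG' : ∀ u v : G, closure {u, v} = ⊤ → u ∈ commutator G := by
    intro u v huv
    have h := (hf u v huv).symm.trans (hf u (u * v) (closure_pair_mul_right_eq_top huv))
    rw [← Abelianization.ker_of, MonoidHom.mem_ker]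
    fin_cases j
    · exact absurd rfl hj
    · simpa using h
    · simpa using h
  refine hperf (eq_top_iff.mpr (hxy ▸ (closure_le _).mpr ?_))
  rintro g (rfl | rfl)
  exacts [hG' g y hxy, hG' g x (closure_pair_swap_eq_top hxy)]

lemma eq_one_of_forall_abelianization (hperf : commutator G ≠ ⊤) {x y : G}
    (hxy : closure {x, y} = ⊤) {f : G → Abelianization G} {j : Fin 3}
    (hf : ∀ u v : G, closure {u, v} = ⊤ → f v = Abelianization.of (![u, v, (u * v)⁻¹] j)) :
    j = 1 := by
  have h := eq_zero_of_forall_abelianization hperf hxy (f := f) (j := swap 0 1 j)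
    fun u v huv => by
      rw [hf v u (closure_pair_swap_eq_top huv)]
      fin_cases j <;> simp [swap_apply_of_ne_of_ne, mul_comm]
  rwa [swap_apply_eq_iff, swap_apply_left] at h

lemma apply_snd_eq_self_of_forall (hcen : ∀ g h : G, ⁅g, h⁆ ∈ center G) {α : MulAut G} {a b : ℤ}
    (ha : ∀ u v : G, closure {u, v} = ⊤ → α u = u * ⁅u, v⁆ ^ a)
    (hb : ∀ u v : G, closure {u, v} = ⊤ → α v = v * ⁅u, v⁆ ^ b) {u v : G}
    (huv : closure {u, v} = ⊤) : α v = v := by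
  have hmul : α (u * v) = u * v * ⁅u, v⁆ ^ a := by
    rw [ha (u * v) v (closure_pair_mul_left_eq_top huv), commutatorElement_mul_left_eq_conj_mul,
      commutatorElement_self, mul_one, mul_inv_cancel, one_mul]
  have key : u * v * ⁅u, v⁆ ^ a * ⁅u, v⁆ ^ b = u * v * ⁅u, v⁆ ^ a :=
    calc u * v * ⁅u, v⁆ ^ a * ⁅u, v⁆ ^ b = u * ⁅u, v⁆ ^ a * (v * ⁅u, v⁆ ^ b) := by
          rw [mul_assoc u v, mem_center_iff.mp (zpow_mem (hcen u v) a) v]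
          group
      _ = α (u * v) := by rw [map_mul, ha u v huv, hb u v huv]
      _ = u * v * ⁅u, v⁆ ^ a := hmul
  rw [hb u v huv, mul_eq_left.mp key, mul_one]

theorem dAutT_eq_one_of_isCoordTwist (hcen : ∀ g h : G, ⁅g, h⁆ ∈ center G)
    (hperf : commutator G ≠ ⊤) {α : MulAut G} (hα : IsCoordTwist (dAutT α)) : dAutT α = 1 := by
  obtain ⟨π, n, hα⟩ := hα
  have hpair (i : Fin 3) : ∀ u v : G, closure {u, v} = ⊤ →
      α (![u, v, (u * v)⁻¹] i) = ![u, v, (u * v)⁻¹] (π i) * ⁅u, v⁆ ^ n i := fun u v huv => by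
    simpa only [coord_dAutT, coord_tripleOfPair, Matrix.cons_val_zero, Matrix.cons_val_one]
      using hα (tripleOfPair huv) i
  have hab (i : Fin 3) : ∀ u v : G, closure {u, v} = ⊤ →
      Abelianization.of (α (![u, v, (u * v)⁻¹] i)) =
        Abelianization.of (![u, v, (u * v)⁻¹] (π i)) := fun u v huv => by
    rw [hpair i u v huv, map_mul, map_zpow, map_commutatorElement,
      commutatorElement_eq_one_iff_commute.mpr (Commute.all _ _), one_zpow, mul_one]
  ext ⟨⟨x, y, z⟩, hxy, hxyz⟩ : 2
  have h0 : π 0 = 0 := eq_zero_of_forall_abelianization hperf hxy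
    (f := fun u => Abelianization.of (α u)) (hab 0)
  have h1 : π 1 = 1 := eq_one_of_forall_abelianization hperf hxy
    (f := fun u => Abelianization.of (α u)) (hab 1)
  have hfix : ∀ u v : G, closure {u, v} = ⊤ → α v = v :=
    fun u v => apply_snd_eq_self_of_forall hcen (by simpa [h0] using hpair 0)
      (by simpa [h1] using hpair 1)
  have hx : α x = x := hfix y x (closure_pair_swap_eq_top hxy)
  have hy : α y = y := hfix x y hxy
  have hz : z = (x * y)⁻¹ := eq_inv_of_mul_eq_one_right hxyz
  simp [dAutT, hx, hy, hz]

end Automorphisms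

section InnerAutomorphisms

variable (G) in
def dAutHom : MulAut G →* Perm (TripleSet G) where
  toFun := dAutT
  map_one' := rfl
  map_mul' _ _ := rfl

lemma dAutHom_apply (α : MulAut G) : dAutHom G α = dAutT α := rfl

lemma dInnT_eq_dAutHom_conj (g : G) : dInnT g = dAutHom G (MulAut.conj g) := rfl

lemma sigmaSubgroup_le_centralizer_range_dAutHom :
    sigmaSubgroup G ≤ centralizer (dAutHom G).range := by
  rw [sigmaSubgroup, closure_le]
  rintro σ hσ _ ⟨α, rfl⟩
  rcases hσ with rfl | rfl | rfl | rfl | rfl <;>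
    ext ⟨⟨x, y, z⟩, h⟩ : 2 <;>
    simp only [sigma2T, Perm.mul_apply, dAutHom_apply] <;>
    simp [dAutT, sigma1T, sigma3T, sigma4T, sigma5T]

lemma exists_dInnT_mul_of_mem_IGroup {ρ : Perm (TripleSet G)} (hρ : ρ ∈ IGroup G) :
    ∃ g : G, ∃ s ∈ sigmaSubgroup G, ρ = dInnT g * s := by
  induction hρ using closure_induction'' with
  | mem ρ hρ =>
    rcases hρ with ⟨g, rfl⟩ | hσ
    · exact ⟨g, 1, one_mem _, (mul_one _).symm⟩
    · exact ⟨1, ρ, subset_closure hσ, by simp [dInnT_eq_dAutHom_conj]⟩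
  | inv_mem ρ hρ =>
    rcases hρ with ⟨g, rfl⟩ | hσ
    · exact ⟨g⁻¹, 1, one_mem _, by simp [dInnT_eq_dAutHom_conj]⟩
    · exact ⟨1, ρ⁻¹, inv_mem (subset_closure hσ), by simp [dInnT_eq_dAutHom_conj]⟩
  | one => exact ⟨1, 1, one_mem _, by simp [dInnT_eq_dAutHom_conj]⟩
  | mul _ _ _ _ hρ hρ' =>
    obtain ⟨g, s, hs, rfl⟩ := hρ
    obtain ⟨g', s', hs', rfl⟩ := hρ'
    have hcomm : s * dInnT g' = dInnT g' * s :=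
      (mem_centralizer_iff.mp (sigmaSubgroup_le_centralizer_range_dAutHom hs) _ ⟨_, rfl⟩).symm
    refine ⟨g * g', s * s', mul_mem hs hs', ?_⟩
    rw [dInnT_eq_dAutHom_conj (g * g'), map_mul, map_mul, ← dInnT_eq_dAutHom_conj,
      ← dInnT_eq_dAutHom_conj, mul_assoc, ← mul_assoc s, hcomm]
    group

end InnerAutomorphisms

section Intersections

variable (hcen : ∀ g h : G, ⁅g, h⁆ ∈ center G) (hperf : commutator G ≠ ⊤)
include hcen hperf

lemma dInnT_eq_one_of_mem_SS14 {g : G} (hg : dInnT g ∈ SS14 G) : dInnT g = 1 :=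
  dAutT_eq_one_of_isCoordTwist hcen hperf
    (isCoordTwist_of_mem_sigmaSubgroup hcen (SS14_le_sigmaSubgroup hg))

lemma exists_dAutT_eq_dInnT_of_mem_IGroup {α : MulAut G} (hα : dAutT α ∈ IGroup G) :
    ∃ g : G, dAutT α = dInnT g := by
  obtain ⟨g, s, hs, hαs⟩ := exists_dInnT_mul_of_mem_IGroup hα
  have hs' : dAutT ((MulAut.conj g)⁻¹ * α) = s := by
    rw [← dAutHom_apply, map_mul, map_inv, ← dInnT_eq_dAutHom_conj, dAutHom_apply, hαs,
      inv_mul_cancel_left]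
  subst hs'
  refine ⟨g, ?_⟩
  rw [hαs, dAutT_eq_one_of_isCoordTwist hcen hperf (isCoordTwist_of_mem_sigmaSubgroup hcen hs),
    mul_one]

end Intersections

theorem statement15_general (G : Type*) [Group G]
    (hcl2 : Subgroup.lowerCentralSeries (⊤ : Subgroup G) 2 = ⊥ ∧
      Subgroup.lowerCentralSeries (⊤ : Subgroup G) 1 ≠ ⊥) :
    (Set.range (dInnT (G := G)) ∩ (SS14 G : Set (Equiv.Perm (TripleSet G))) = {1}) ∧
    (((IGroup G).prod (IGroup G) :
        Set (Equiv.Perm (TripleSet G) × Equiv.Perm (TripleSet G))) ∩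
      {q | ∃ α : MulAut G, q = (dAutT α, dAutT α)} =
      {q | ∃ g : G, q = (dInnT g, dInnT g)}) := by
  have hcen := commutatorElement_mem_center_of_lowerCentralSeries_two_eq_bot hcl2.1
  have hperf := commutator_ne_top_of_lowerCentralSeries hcl2
  constructor
  · ext ρ
    constructor
    · rintro ⟨⟨g, rfl⟩, hg⟩
      exact dInnT_eq_one_of_mem_SS14 hcen hperf hg
    · rintro rfl
      exact ⟨⟨1, by simp [dInnT_eq_dAutHom_conj]⟩, one_mem _⟩
  · ext ρ
    constructor
    · rintro ⟨hρ, α, rfl⟩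
      obtain ⟨g, hg⟩ := exists_dAutT_eq_dInnT_of_mem_IGroup hcen hperf (mem_prod.mp hρ).1
      exact ⟨g, by rw [hg]⟩
    · rintro ⟨g, rfl⟩
      have hg : dInnT g ∈ IGroup G := subset_closure (Or.inl ⟨g, rfl⟩)
      exact ⟨mem_prod.mpr ⟨hg, hg⟩, MulAut.conj g, rfl⟩

theorem statement15 (p : ℕ) (hp : p.Prime) (G : Type*) [Group G] [Finite G]
    (hpG : IsPGroup p G) (hB : IsBeauvilleGroup G)
    (hcl2 : Subgroup.lowerCentralSeries (⊤ : Subgroup G) 2 = ⊥ ∧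
      Subgroup.lowerCentralSeries (⊤ : Subgroup G) 1 ≠ ⊥) :
    (Set.range (dInnT (G := G)) ∩ (SS14 G : Set (Equiv.Perm (TripleSet G))) = {1}) ∧
    (((IGroup G).prod (IGroup G) :
        Set (Equiv.Perm (TripleSet G) × Equiv.Perm (TripleSet G))) ∩
      {q | ∃ α : MulAut G, q = (dAutT α, dAutT α)} =
      {q | ∃ g : G, q = (dInnT g, dInnT g)}) :=
  statement15_general G hcl2

end Beauville
end
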